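/- The identity operator from the column Hilbertian H_c to the row Hilbertian H_r of an infinite-dimensional Hilbert space H is not completely bounded, although it is an isometry of the underlying normed spaces. -/

import Mathlib

/-!
The underlying norms agree by the C*-identity `‖a* a‖ = ‖a‖² = ‖a a*‖`. For complete
boundedness, take a unit vector `u` and orthonormal `v₁, …, vₙ` in `L` and put
`aₖ = |u⟩⟨vₖ|`. Then `Σ aₖ aₖ* = n |u⟩⟨u|` has norm `n`, while `Σ aₖ* aₖ = Σ |vₖ⟩⟨vₖ|` is
the orthogonal projection onto `span v`, of norm at most `1`; so the amplification of the
identity has norm at least `√n` for every `n`.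
-/

open ContinuousLinearMap InnerProductSpace

theorem exists_orthonormal_fin_of_not_finiteDimensional {𝕜 E : Type*} [RCLike 𝕜]
    [NormedAddCommGroup E] [InnerProductSpace 𝕜 E] (hE : ¬ FiniteDimensional 𝕜 E) (n : ℕ) :
    ∃ v : Fin n → E, Orthonormal 𝕜 v := by
  have hrank : (n : Cardinal) ≤ Module.rank 𝕜 E :=
    Cardinal.natCast_lt_aleph0.le.trans (not_lt.mp (mt Module.rank_lt_aleph0_iff.mp hE))
  obtain ⟨f, hf⟩ := exists_linearIndependent_of_le_rank hrank
  exact ⟨gramSchmidtNormed 𝕜 f, gramSchmidtNormed_orthonormal hf⟩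

section RankOne

variable {𝕜 E : Type*} [RCLike 𝕜] [NormedAddCommGroup E] [InnerProductSpace 𝕜 E]
  {ι : Type*} [Fintype ι] {v : ι → E}

theorem isCompactOperator_rankOne (x y : E) : IsCompactOperator (rankOne 𝕜 x y) :=
  (isCompactOperator_of_locallyCompactSpace_rng (toSpanSingleton 𝕜 x)).comp_clm (innerSL 𝕜 y)

theorem Orthonormal.norm_sum_rankOne_self_le_one (hv : Orthonormal 𝕜 v) :
    ‖∑ i, rankOne 𝕜 (v i) (v i)‖ ≤ 1 := by
  classical
  have hP := (OrthonormalBasis.span hv Finset.univ).starProjection_eq_sum_rankOne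
  simp only [OrthonormalBasis.span_apply, Finset.sum_coe_sort_eq_attach,
    Finset.sum_attach Finset.univ fun i => rankOne 𝕜 (v i) (v i)] at hP
  exact hP ▸ Submodule.starProjection_norm_le _

variable [CompleteSpace E] {u : E}

theorem Orthonormal.norm_sum_rankOne_comp_adjoint (hv : Orthonormal 𝕜 v) (hu : ‖u‖ = 1) :
    ‖∑ i, rankOne 𝕜 u (v i) ∘L adjoint (rankOne 𝕜 u (v i))‖ = Fintype.card ι := by
  have hsum : ∑ i, rankOne 𝕜 u (v i) ∘L adjoint (rankOne 𝕜 u (v i)) =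
      Fintype.card ι • rankOne 𝕜 u u := by
    simp only [adjoint_rankOne, rankOne_comp_rankOne, inner_self_eq_norm_sq_to_K, hv.1]
    simp
  rw [hsum, RCLike.norm_nsmul 𝕜, norm_rankOne, hu, mul_one, nsmul_eq_mul, mul_one]

theorem Orthonormal.norm_sum_adjoint_rankOne_comp_le_one (hv : Orthonormal 𝕜 v) (hu : ‖u‖ = 1) :
    ‖∑ i, adjoint (rankOne 𝕜 u (v i)) ∘L rankOne 𝕜 u (v i)‖ ≤ 1 := by
  simpa [rankOne_comp_rankOne, hu] using hv.norm_sum_rankOne_self_le_one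

end RankOne

theorem exists_nat_abs_lt_sqrt (C : ℝ) : ∃ n : ℕ, |C| < √n := by
  obtain ⟨n, hn⟩ := exists_nat_gt (C ^ 2)
  exact ⟨n, (Real.lt_sqrt (abs_nonneg C)).mpr (by rwa [sq_abs])⟩

open ContinuousLinearMap in
/-- The identity operator `1 : H_c → H_r` (`H` infinite-dimensional) is an isometry of
the underlying normed spaces but is not completely bounded.  An element of `KH` is
represented as `Σₖ aₖ ⊗ eₖ` with `aₖ ∈ K(L)` and `(eₖ)` orthonormal in `H`; its norm
in `KH_c` is `‖Σₖ aₖ* aₖ‖^{1/2}` and in `KH_r` is `‖Σₖ aₖ aₖ*‖^{1/2}`.  The first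
conjunct (the C*-identity `‖a* a‖ = ‖a a*‖`) says the underlying norms coincide, and
the second says that no constant `C` bounds the amplification `1_∞ : KH_c → KH_r`. -/
theorem identity_column_to_row_not_cb
    {L : Type*} [NormedAddCommGroup L] [InnerProductSpace ℂ L] [CompleteSpace L]
    {H : Type*} [NormedAddCommGroup H] [InnerProductSpace ℂ H]
    (hL : ¬ FiniteDimensional ℂ L) (hH : ¬ FiniteDimensional ℂ H) :
    (∀ a : L →L[ℂ] L, ‖adjoint a ∘L a‖ = ‖a ∘L adjoint a‖) ∧
    ¬ ∃ C : ℝ, ∀ (n : ℕ) (a : Fin n → (L →L[ℂ] L)) (e : Fin n → H),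
      (∀ k, IsCompactOperator (a k)) → Orthonormal ℂ e →
      Real.sqrt ‖∑ k, a k ∘L adjoint (a k)‖ ≤
        C * Real.sqrt ‖∑ k, adjoint (a k) ∘L a k‖ := by
  refine ⟨fun a => CStarRing.norm_star_mul_self.trans CStarRing.norm_self_mul_star.symm, ?_⟩
  rintro ⟨C, hC⟩
  obtain ⟨n, hn⟩ := exists_nat_abs_lt_sqrt C
  obtain ⟨u, hu⟩ := exists_orthonormal_fin_of_not_finiteDimensional hL 1
  obtain ⟨v, hv⟩ := exists_orthonormal_fin_of_not_finiteDimensional hL n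
  obtain ⟨e, he⟩ := exists_orthonormal_fin_of_not_finiteDimensional hH n
  have hcb := hC n (fun k => rankOne ℂ (u 0) (v k)) e
    (fun k => isCompactOperator_rankOne _ _) he
  rw [hv.norm_sum_rankOne_comp_adjoint (hu.1 0), Fintype.card_fin] at hcb
  have hcol := Real.sqrt_le_one.mpr (hv.norm_sum_adjoint_rankOne_comp_le_one (hu.1 0))
  exact hn.not_ge <| hcb.trans <| (mul_le_mul_of_nonneg_right (le_abs_self C)
    (Real.sqrt_nonneg _)).trans (mul_le_of_le_one_right (abs_nonneg C) hcol)
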